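/- arXiv:2412.13353 — 2 statements merged into one kernel-verified Lean document; each statement's English description precedes it below -/
import Mathlib

section
/- In the ring R = ℤ[d₂, d₃, d₄, y]/(2d₃, y·d₃, y² − 4d₄), the element y is not divisible by 2, but y² is divisible by 4 (indeed y² = 4d₄). -/
/-!
The ring map `R → 𝔽₂[ε]` with `d₂, d₃, d₄ ↦ 0` and `y ↦ ε` kills all three relations
(`ε² = 0` and `2 = 0` in `𝔽₂`). It sends `2 * s` to `0`, since the image of `2` vanishes,
but sends `y` to `ε ≠ 0`; hence `y` is not divisible by `2`.
-/

open MvPolynomial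

/-- The defining ideal of `CH^*(BSO₄) = ℤ[d₂,d₃,d₄,y]/(2d₃, y·d₃, y² - 4d₄)`,
with variables `X 0 = d₂`, `X 1 = d₃`, `X 2 = d₄`, `X 3 = y`. -/
noncomputable def chowIdeal : Ideal (MvPolynomial (Fin 4) ℤ) :=
  Ideal.span {2 * X 1, X 3 * X 1, X 3 ^ 2 - 4 * X 2}

/-- The Chow ring of `BSO₄`. -/
noncomputable abbrev ChowR : Type := MvPolynomial (Fin 4) ℤ ⧸ chowIdeal

open DualNumber

theorem DualNumber.eps_ne_two_mul {R : Type*} [Semiring R] [Nontrivial R] [CharP R 2]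
    (s : R[ε]) : ε ≠ 2 * s := by
  intro h
  have hsnd := congrArg TrivSqZeroExt.snd h
  rw [two_mul, TrivSqZeroExt.snd_add, ← two_mul, CharTwo.two_eq_zero, zero_mul] at hsnd
  simp at hsnd

theorem chowIdeal_le_ker_aeval_eps :
    chowIdeal ≤ RingHom.ker (aeval ![0, 0, 0, ε] : MvPolynomial (Fin 4) ℤ →ₐ[ℤ] (ZMod 2)[ε]) := by
  rw [chowIdeal, Ideal.span_le]
  simp [Set.insert_subset_iff, sq]

noncomputable def chowToDualNumber : ChowR →+* (ZMod 2)[ε] :=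
  Ideal.Quotient.lift chowIdeal _ chowIdeal_le_ker_aeval_eps

theorem chowToDualNumber_mk_X3 : chowToDualNumber (Ideal.Quotient.mk chowIdeal (X 3)) = ε := by
  simp [chowToDualNumber]

theorem mk_X3_sq_eq_four_mul_mk_X2 :
    Ideal.Quotient.mk chowIdeal (X 3) ^ 2 = 4 * Ideal.Quotient.mk chowIdeal (X 2) := by
  rw [← map_pow, ← map_ofNat (Ideal.Quotient.mk chowIdeal) 4, ← map_mul,
    Ideal.Quotient.mk_eq_mk_iff_sub_mem]
  exact Ideal.subset_span (by simp)

/-- In `CH^*(BSO₄)`, `y` is not divisible by `2`, but `y² = 4d₄` is divisible by `4`. -/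
theorem stmt_7 :
    (¬ ∃ s : ChowR, Ideal.Quotient.mk chowIdeal (X 3) = 2 * s) ∧
    Ideal.Quotient.mk chowIdeal (X 3) ^ 2 = 4 * Ideal.Quotient.mk chowIdeal (X 2) ∧
    (∃ s : ChowR, Ideal.Quotient.mk chowIdeal (X 3) ^ 2 = 4 * s) := by
  refine ⟨?_, mk_X3_sq_eq_four_mul_mk_X2, _, mk_X3_sq_eq_four_mul_mk_X2⟩
  rintro ⟨s, hs⟩
  apply eps_ne_two_mul (chowToDualNumber s)
  rw [← chowToDualNumber_mk_X3, hs, map_mul, map_ofNat]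
end

section
/- Let μ: (ℤ/2)[p₁, e, b] → (ℤ/2)[w₂, w₃, w₄] be the ring homomorphism with μ(p₁) = w₂², μ(e) = w₄, μ(b) = w₃, and let β be the derivation on (ℤ/2)[w₂, w₃, w₄] with β(w₂) = w₃, β(w₃) = β(w₄) = 0. Then the image of μ equals the kernel of β. -/
/-!
Over `ℤ/2` the derivation `β` is `w₃ · ∂/∂w₂`, so its kernel consists of the polynomials in which
`w₂` occurs only with even exponents. These are exactly the polynomials in `w₂², w₃, w₄`, which is
the image of `μ`; conversely `β` kills `w₂²`, `w₃`, `w₄`, hence the subalgebra they generate.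
-/

open MvPolynomial

/-- `(ℤ/2)[w₂, w₃, w₄]`, with `X 0 = w₂`, `X 1 = w₃`, `X 2 = w₄`. -/
noncomputable abbrev T3 : Type := MvPolynomial (Fin 3) (ZMod 2)

/-- The Bockstein derivation `β` with `β w₂ = w₃`, `β w₃ = 0`, `β w₄ = 0`. -/
noncomputable def bock : Derivation (ZMod 2) T3 T3 :=
  MvPolynomial.mkDerivation (ZMod 2) ![X 1, 0, 0]

/-- The map `μ : (ℤ/2)[p₁,e,b] → (ℤ/2)[w₂,w₃,w₄]`, `p₁ ↦ w₂²`, `e ↦ w₄`, `b ↦ w₃`. -/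
noncomputable def muBar : MvPolynomial (Fin 3) (ZMod 2) →ₐ[ZMod 2] T3 :=
  MvPolynomial.aeval ![(X 0 : T3) ^ 2, X 2, X 1]

namespace MvPolynomial

variable {R σ : Type*} [CommSemiring R]

theorem dvd_of_pderiv_eq_zero [NoZeroDivisors R] (p : ℕ) [CharP R p] {i : σ}
    {f : MvPolynomial σ R} (hf : pderiv i f = 0) {m : σ →₀ ℕ} (hm : m ∈ f.support) :
    p ∣ m i := by
  obtain hmi | hmi := Nat.eq_zero_or_pos (m i)
  · simp [hmi]
  obtain ⟨n, rfl⟩ : ∃ n, m = n + Finsupp.single i 1 :=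
    ⟨m - Finsupp.single i 1, (tsub_add_cancel_of_le (Finsupp.single_le_iff.mpr hmi)).symm⟩
  have hcoeff := coeff_pderiv (i := i) f n
  rw [hf, coeff_zero, eq_comm, mul_eq_zero] at hcoeff
  have hcast : (((n + Finsupp.single i 1 : σ →₀ ℕ) i : ℕ) : R) = 0 := by
    simpa using hcoeff.resolve_left (mem_support_iff.mp hm)
  exact (CharP.cast_eq_zero_iff R p _).mp hcast

theorem mem_subalgebra_of_forall_dvd {S : Subalgebra R (MvPolynomial σ R)} {i : σ} {k : ℕ}
    (hi : X i ^ k ∈ S) (hj : ∀ j ≠ i, X j ∈ S) {f : MvPolynomial σ R}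
    (hf : ∀ m ∈ f.support, k ∣ m i) : f ∈ S := by
  rw [f.as_sum]
  refine S.sum_mem fun m hm => ?_
  rw [monomial_eq]
  refine S.mul_mem (S.algebraMap_mem _) (S.prod_mem fun j _ => ?_)
  obtain rfl | hji := eq_or_ne j i
  · obtain ⟨l, hl⟩ := hf m hm
    change X j ^ m j ∈ S
    rw [hl, pow_mul]
    exact S.pow_mem hi l
  · exact S.pow_mem (hj j hji) _

end MvPolynomial

lemma bock_apply (p : T3) : bock p = X 1 * pderiv 0 p := by
  have : bock = (X 1 : T3) • pderiv 0 := by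
    refine MvPolynomial.derivation_ext fun i => ?_
    fin_cases i <;> simp [bock, mkDerivation_X, pderiv_X]
  rw [this]; rfl

lemma range_muBar :
    muBar.range = Algebra.adjoin (ZMod 2) (Set.range ![(X 0 : T3) ^ 2, X 2, X 1]) :=
  aeval_range _

lemma bock_muBar (q : MvPolynomial (Fin 3) (ZMod 2)) : bock (muBar q) = 0 := by
  have hgen : Set.EqOn bock (0 : Derivation (ZMod 2) T3 T3)
      (Set.range ![(X 0 : T3) ^ 2, X 2, X 1]) := by
    rintro _ ⟨i, rfl⟩
    fin_cases i <;> simp [bock_apply, pderiv_X, CharTwo.two_eq_zero]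
  exact Derivation.eqOn_adjoin hgen (range_muBar ▸ muBar.mem_range_self q)

/-- The image of `μ` is exactly the kernel of the Bockstein `β`. -/
theorem stmt_10 : Set.range ⇑muBar = {p : T3 | bock p = 0} := by
  ext p
  refine ⟨fun ⟨q, hq⟩ => hq ▸ bock_muBar q, fun hp => ?_⟩
  have hpderiv : pderiv 0 p = 0 :=
    (mul_eq_zero.mp ((bock_apply p).symm.trans hp)).resolve_left (X_ne_zero 1)
  refine mem_subalgebra_of_forall_dvd (S := muBar.range) (i := 0) (k := 2)
    ⟨X 0, by simp [muBar]⟩ ?_ fun m hm => dvd_of_pderiv_eq_zero 2 hpderiv hm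
  intro j hj
  fin_cases j
  · exact absurd rfl hj
  · exact ⟨X 2, by simp [muBar]⟩
  · exact ⟨X 1, by simp [muBar]⟩
end
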